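/- Let h : X₁^OTW → X₂^OTW be a conjugacy between OTW-subshifts over alphabets 𝒜₁ and 𝒜₂, let α ∈ L_{X₁} and let F ⊆ 𝒜₁ be a finite set. Then h(𝒵₁(α,F)) = ⋃_{i=1}^m 𝒵₂(μⁱ, Mⁱ) for some m ∈ ℕ, words μⁱ ∈ L_{X₂} with |μⁱ| ≥ |α| and finite sets Mⁱ ⊆ 𝒜₂. Moreover, if α ∈ X₁^fin, then μ^j = h(α) for some j, and every μⁱ with |μⁱ| = |α| and μⁱ ∈ X₂^fin satisfies μⁱ = h(α). -/

import Mathlib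

open Set

section Subshift

variable {A : Type*}

/-- The word `w` occurs as a block of `x` at position `i`. -/
def IsBlockAt (x : ℕ → A) (w : List A) (i : ℕ) : Prop :=
  ∀ j, ∀ _ : j < w.length, x (i + j) = w[j]

/-- The subshift `X_F ⊆ 𝒜^ℕ` determined by the set `F` of forbidden words. -/
def SubshiftOf (F : Set (List A)) : Set (ℕ → A) :=
  {x | ∀ w ∈ F, ∀ i, ¬ IsBlockAt x w i}

/-- The language of the subshift: all finite words occurring in some element of `X_F`. -/
def Lang (F : Set (List A)) : Set (List A) :=
  {w | ∃ x ∈ SubshiftOf F, ∃ i, IsBlockAt x w i}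

/-- Concatenation of a finite word with an infinite sequence. -/
def wcat (w : List A) (x : ℕ → A) : ℕ → A := fun n =>
  if h : n < w.length then w[n] else x (n - w.length)

/-- `C(α,β) = {β x ∈ X : α x ∈ X}`. -/
def Cset (F : Set (List A)) (α β : List A) : Set (ℕ → A) :=
  {y | ∃ x : ℕ → A, y = wcat β x ∧ wcat β x ∈ SubshiftOf F ∧ wcat α x ∈ SubshiftOf F}

/-- The cylinder set `Z_β = C(ω,β)`. -/
def Zcyl (F : Set (List A)) (β : List A) : Set (ℕ → A) := Cset F [] β

/-- The follower set `F_α = C(α,ω)`. -/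
def Fol (F : Set (List A)) (α : List A) : Set (ℕ → A) := Cset F α []

/-- The relative range `r(S,w) = {x ∈ X : w x ∈ S}`. -/
def relRange (F : Set (List A)) (S : Set (ℕ → A)) (w : List A) : Set (ℕ → A) :=
  {x | x ∈ SubshiftOf F ∧ wcat w x ∈ S}

/-- Membership in the Boolean algebra `𝒰` of subsets of `X` generated by the sets
`C(α,β)`, `α, β ∈ L_X`: closed under finite unions, finite intersections and
complements in `X`. -/
inductive InU (F : Set (List A)) : Set (ℕ → A) → Prop
  | base {α β : List A} (hα : α ∈ Lang F) (hβ : β ∈ Lang F) : InU F (Cset F α β)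
  | union {S T : Set (ℕ → A)} : InU F S → InU F T → InU F (S ∪ T)
  | inter {S T : Set (ℕ → A)} : InU F S → InU F T → InU F (S ∩ T)
  | compl {S : Set (ℕ → A)} : InU F S → InU F (SubshiftOf F \ S)

/-- `αβ⁻¹` is in reduced form in the free group on the alphabet:
`α` and `β` do not end in the same letter. -/
def ReducedPair (α β : List A) : Prop :=
  ¬ ∃ c : A, α.getLast? = some c ∧ β.getLast? = some c

/-- Ultrafilters (= prime filters) of the Boolean algebra `𝒰`. -/
structure UltraU (F : Set (List A)) where
  sets : Set (Set (ℕ → A))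
  mem_inU : ∀ S ∈ sets, InU F S
  nonempty : sets.Nonempty
  empty_not_mem : ∅ ∉ sets
  inter_mem : ∀ S ∈ sets, ∀ T ∈ sets, S ∩ T ∈ sets
  superset_mem : ∀ S ∈ sets, ∀ T : Set (ℕ → A), InU F T → S ⊆ T → T ∈ sets
  prime : ∀ S T : Set (ℕ → A), InU F S → InU F T → S ∪ T ∈ sets → S ∈ sets ∨ T ∈ sets

/-- The basic (compact) open set `O_S = {ξ ∈ 𝒰̂ : S ∈ ξ}` of the Stone dual `𝒰̂`. -/
def Oset (F : Set (List A)) (S : Set (ℕ → A)) : Set (UltraU F) := {ξ | S ∈ ξ.sets}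

/-- The Stone topology on `𝒰̂`. -/
instance (F : Set (List A)) : TopologicalSpace (UltraU F) :=
  TopologicalSpace.generateFrom {V | ∃ S : Set (ℕ → A), InU F S ∧ V = Oset F S}

/-- The graph of the partially defined map `σ̂` on `𝒰̂`:
`sigmaHatRel F ξ η` holds iff `ξ ∈ dom σ̂` and `η = σ̂(ξ)`. -/
def sigmaHatRel (F : Set (List A)) (ξ η : UltraU F) : Prop :=
  ∃ a : A, Zcyl F [a] ∈ ξ.sets ∧
    η.sets = {B : Set (ℕ → A) | InU F B ∧ ∃ S ∈ ξ.sets, relRange F S [a] ⊆ B}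

/- The OTW subshift, modelled inside `ℕ → Option A`; a finite word corresponds to a
sequence that is eventually `none` (`none` playing the role of the symbol `∞`). -/

/-- The shift map, deleting the first letter (it sends sequences of length `≤ 1`
to the empty sequence). -/
def shiftO (y : ℕ → Option A) : ℕ → Option A := fun i => y (i + 1)

/-- An infinite sequence, as an element of the OTW model. -/
def ofSeq (x : ℕ → A) : ℕ → Option A := fun i => some (x i)

/-- A finite word, as an element of the OTW model. -/
def ofWord (w : List A) : ℕ → Option A := fun i =>
  if h : i < w.length then some w[i] else none

/-- Concatenation of a finite word with an element of the OTW model. -/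
def wcatO (w : List A) (y : ℕ → Option A) : ℕ → Option A := fun n =>
  if h : n < w.length then some w[n] else y (n - w.length)

/-- The finite words belonging to `X^fin`: those `w` for which there are infinitely many
letters `a` such that `w a y ∈ X^inf` for some `y`. -/
def XFin (F : Set (List A)) : Set (List A) :=
  {w | {a : A | ∃ y : ℕ → A, wcat (w ++ [a]) y ∈ SubshiftOf F}.Infinite}

/-- The OTW subshift `X^OTW = X^inf ∪ X^fin`. -/
def OTW (F : Set (List A)) : Set (ℕ → Option A) :=
  ofSeq '' SubshiftOf F ∪ ofWord '' XFin F

theorem ofSeq_mem_OTW {F : Set (List A)} {x : ℕ → A} (hx : x ∈ SubshiftOf F) :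
    ofSeq x ∈ OTW F := Or.inl ⟨x, hx, rfl⟩

theorem ofWord_mem_OTW {F : Set (List A)} {w : List A} (hw : w ∈ XFin F) :
    ofWord w ∈ OTW F := Or.inr ⟨w, hw, rfl⟩

/-- The generalised cylinder `𝒵(w,F') = {y ∈ X^OTW : y` begins with `w`, and the next
letter of `y` is not in `F'}`. -/
def genCyl (F : Set (List A)) (w : List A) (F' : Set A) : Set (ℕ → Option A) :=
  {y | y ∈ OTW F ∧ (∀ j, ∀ _ : j < w.length, y j = some w[j]) ∧
    ∀ a ∈ F', y w.length ≠ some a}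

/-- The follower set `ℱ(w) = {y ∈ X^OTW : w y ∈ X^OTW}` in the OTW subshift. -/
def folO (F : Set (List A)) (w : List A) : Set (ℕ → Option A) :=
  {y | y ∈ OTW F ∧ wcatO w y ∈ OTW F}

/-- The topology on `X^OTW`, generated by the generalised cylinders. -/
instance (F : Set (List A)) : TopologicalSpace ↥(OTW F) :=
  TopologicalSpace.generateFrom
    {V | ∃ w ∈ Lang F, ∃ F' : Set A, F'.Finite ∧
      V = {y : ↥(OTW F) | (y : ℕ → Option A) ∈ genCyl F w F'}}

/-- The graph of the map `π : 𝒰̂ → X^OTW`: `piRel F ξ y` holds iff `π(ξ) = y`.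
(`y` begins with a nonempty word `w` iff `Z_w ∈ ξ`.) -/
def piRel (F : Set (List A)) (ξ : UltraU F) (y : ℕ → Option A) : Prop :=
  (∀ i, y i = none → y (i + 1) = none) ∧
  ∀ w : List A, w ≠ [] →
    ((∀ j, ∀ _ : j < w.length, y j = some w[j]) ↔ Zcyl F w ∈ ξ.sets)

end Subshift

section Conjugacy

variable {A₁ A₂ : Type*}

/-- `h` commutes with the shift maps. -/
def ShiftCommuting (F₁ : Set (List A₁)) (F₂ : Set (List A₂))
    (h : ↥(OTW F₁) → ↥(OTW F₂)) : Prop :=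
  ∀ (y : ↥(OTW F₁)) (hy : shiftO (y : ℕ → Option A₁) ∈ OTW F₁),
    (h ⟨shiftO (y : ℕ → Option A₁), hy⟩ : ℕ → Option A₂) =
      shiftO ((h y : ℕ → Option A₂))

/-- `h` is length-preserving: `h y` and `y` have the same length, i.e. the same
positions where the symbol `∞` (here `none`) occurs. -/
def LengthPreserving (F₁ : Set (List A₁)) (F₂ : Set (List A₂))
    (h : ↥(OTW F₁) → ↥(OTW F₂)) : Prop :=
  ∀ (y : ↥(OTW F₁)) (i : ℕ),
    ((h y : ℕ → Option A₂) i = none ↔ (y : ℕ → Option A₁) i = none)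

/-- A conjugacy of OTW subshifts: a homeomorphism commuting with the shifts and
preserving lengths. -/
def IsConjugacy (F₁ : Set (List A₁)) (F₂ : Set (List A₂))
    (h : ↥(OTW F₁) ≃ₜ ↥(OTW F₂)) : Prop :=
  ShiftCommuting F₁ F₂ ⇑h ∧ LengthPreserving F₁ F₂ ⇑h

/-- The image `h̄(S) = h(S)` of a subset `S ⊆ X₁` under (the restriction to `X₁` of)
a map `h : X₁^OTW → X₂^OTW`. -/
def hbar (F₁ : Set (List A₁)) (F₂ : Set (List A₂))
    (h : ↥(OTW F₁) → ↥(OTW F₂)) (S : Set (ℕ → A₁)) : Set (ℕ → A₂) :=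
  {z | ∃ y : ↥(OTW F₁), (y : ℕ → Option A₁) ∈ ofSeq '' S ∧
    ofSeq z = (h y : ℕ → Option A₂)}

end Conjugacy

/-!
The cylinder `𝒵₁(α, F)` is clopen and `X₁^OTW` is compact, so its image under the homeomorphism
`h` is compact open. The generalised cylinders form a basis of `X₂^OTW`, hence this image is a
finite union of them. As `h` preserves lengths, the image contains no point shorter than `α`; a
cylinder `𝒵₂(μ, M)` with that property and `|μ| < |α|` has `μ ∉ X₂^fin` (else `μ` itself would be a
short point), so `μ` has only finitely many one-letter extensions and the cylinder splits into
finitely many cylinders of longer words. The claims about `h(α)` follow from length preservation,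
since the only point of length `|μ|` in `𝒵(μ, M)` is `μ`.
-/

open Filter Topology TopologicalSpace

section Words

variable {A : Type*} {F : Set (List A)} {y : ℕ → Option A} {v w : List A}

def HasPrefix (y : ℕ → Option A) (w : List A) : Prop :=
  ∀ j (hj : j < w.length), y j = some w[j]

theorem ofWord_of_lt {i : ℕ} (h : i < w.length) : ofWord w i = some w[i] := dif_pos h

theorem ofWord_eq_none_iff {i : ℕ} : ofWord w i = none ↔ w.length ≤ i := by
  unfold ofWord
  split <;> simp_all

theorem hasPrefix_ofWord (w : List A) : HasPrefix (ofWord w) w := fun _ => ofWord_of_lt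

theorem hasPrefix_nil (y : ℕ → Option A) : HasPrefix y [] :=
  fun _ hj => absurd hj (Nat.not_lt_zero _)

theorem HasPrefix.length_le {n : ℕ} (hw : HasPrefix y w) (hn : y n = none) : w.length ≤ n :=
  not_lt.1 fun h => by simp [hw n h] at hn

theorem HasPrefix.of_isPrefix (hw : HasPrefix y w) (hvw : v <+: w) : HasPrefix y v :=
  fun j hj => by rw [hw j (hj.trans_le hvw.length_le), hvw.getElem hj]

theorem hasPrefix_append_singleton {a : A} :
    HasPrefix y (w ++ [a]) ↔ HasPrefix y w ∧ y w.length = some a := by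
  refine ⟨fun h => ⟨h.of_isPrefix (List.prefix_append _ _), by simpa using h w.length⟩,
    fun ⟨hw, ha⟩ j hj => ?_⟩
  rw [List.length_append, List.length_singleton] at hj
  rcases (Nat.lt_succ_iff.1 hj).lt_or_eq with hj | rfl
  · rw [hw j hj, List.getElem_append_left hj]
  · simpa using ha

theorem HasPrefix.eq_of_length_eq (hv : HasPrefix y v) (hw : HasPrefix y w)
    (hlen : v.length = w.length) : v = w :=
  List.ext_getElem hlen fun j hjv hjw => Option.some_injective _ ((hv j hjv).symm.trans (hw j hjw))

theorem exists_mismatch_of_not_hasPrefix (h : ¬ HasPrefix y w) :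
    ∃ v a, v ++ [a] <+: w ∧ HasPrefix y v ∧ y v.length ≠ some a := by
  induction w using List.reverseRecOn with
  | nil => exact absurd (hasPrefix_nil y) h
  | append_singleton w a ih =>
    by_cases hw : HasPrefix y w
    · exact ⟨w, a, List.prefix_rfl, hw, fun ha => h (hasPrefix_append_singleton.2 ⟨hw, ha⟩)⟩
    · obtain ⟨v, b, hvb, hv, hb⟩ := ih hw
      exact ⟨v, b, hvb.trans (List.prefix_append _ _), hv, hb⟩

theorem ofWord_injective : Function.Injective (ofWord : List A → ℕ → Option A) := by
  intro v w h
  have hle : ∀ {v w : List A}, ofWord v = ofWord w → v.length ≤ w.length := fun h =>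
    (hasPrefix_ofWord _).length_le (by rw [h, ofWord_eq_none_iff])
  exact (hasPrefix_ofWord v).eq_of_length_eq (h ▸ hasPrefix_ofWord w)
    (le_antisymm (hle h) (hle h.symm))

theorem wcat_drop_eq {x : ℕ → A} (h : ∀ j (hj : j < w.length), x j = w[j]) :
    wcat w (fun n => x (n + w.length)) = x := by
  funext n
  unfold wcat
  split_ifs with hn
  · exact (h n hn).symm
  · simp only [Nat.sub_add_cancel (not_lt.1 hn)]

theorem mem_Lang_of_wcat_mem {x : ℕ → A} (h : wcat w x ∈ SubshiftOf F) : w ∈ Lang F :=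
  ⟨_, h, 0, fun j hj => by simp [wcat, hj]⟩

end Words

section OTWBasics

variable {A : Type*} {F : Set (List A)} {y : ℕ → Option A} {w : List A}

theorem ofSeq_ne_ofWord (x : ℕ → A) (w : List A) : ofSeq x ≠ ofWord w := fun h => by
  have := congrFun h w.length
  rw [ofWord_eq_none_iff.2 le_rfl] at this
  cases this

theorem ofWord_mem_OTW_iff : ofWord w ∈ OTW F ↔ w ∈ XFin F := by
  refine ⟨?_, ofWord_mem_OTW⟩
  rintro (⟨x, -, hx⟩ | ⟨v, hv, hvw⟩)
  · exact absurd hx (ofSeq_ne_ofWord x w)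
  · exact ofWord_injective hvw ▸ hv

theorem eq_none_of_le (hy : y ∈ OTW F) {i j : ℕ} (hij : i ≤ j) (hi : y i = none) :
    y j = none := by
  rcases hy with ⟨x, -, rfl⟩ | ⟨v, -, rfl⟩
  · simp [ofSeq] at hi
  · rw [ofWord_eq_none_iff] at hi ⊢
    omega

theorem HasPrefix.eq_ofWord (hy : y ∈ OTW F) (hw : HasPrefix y w) (hn : y w.length = none) :
    y = ofWord w := by
  funext j
  rcases lt_or_ge j w.length with hj | hj
  · rw [hw j hj, ofWord_of_lt hj]
  · rw [eq_none_of_le hy hj hn, ofWord_eq_none_iff.2 hj]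

theorem exists_mem_subshift_extending (hy : y ∈ OTW F) :
    ∃ x ∈ SubshiftOf F, ∀ j a, y j = some a → x j = a := by
  rcases hy with ⟨x, hx, rfl⟩ | ⟨v, hv, rfl⟩
  · exact ⟨x, hx, fun j a h => Option.some_injective _ h⟩
  · obtain ⟨b, x, hx⟩ := hv.nonempty
    refine ⟨_, hx, fun j a h => ?_⟩
    have hj : j < v.length := not_le.1 fun hj => by simp [ofWord_eq_none_iff.2 hj] at h
    rw [ofWord_of_lt hj, Option.some_inj] at h
    rw [wcat, dif_pos (by simp; omega), List.getElem_append_left hj, h]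

theorem exists_wcat_mem_of_hasPrefix (hy : y ∈ OTW F) (hw : HasPrefix y w) :
    ∃ x, wcat w x ∈ SubshiftOf F := by
  obtain ⟨x, hx, hxy⟩ := exists_mem_subshift_extending hy
  exact ⟨_, (wcat_drop_eq fun j hj => hxy j _ (hw j hj)).symm ▸ hx⟩

theorem mem_Lang_of_hasPrefix (hy : y ∈ OTW F) (hw : HasPrefix y w) : w ∈ Lang F :=
  let ⟨_, hx⟩ := exists_wcat_mem_of_hasPrefix hy hw
  mem_Lang_of_wcat_mem hx

theorem ofWord_mem_genCyl (hw : w ∈ XFin F) (F' : Set A) : ofWord w ∈ genCyl F w F' :=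
  ⟨ofWord_mem_OTW hw, hasPrefix_ofWord w, fun a _ h => by
    rw [ofWord_eq_none_iff.2 le_rfl] at h
    cases h⟩

end OTWBasics

section Cylinders

variable {A : Type*} {F : Set (List A)} {y z : ℕ → Option A} {v w : List A} {F' G' : Set A}

theorem genCyl_subset_OTW : genCyl F w F' ⊆ OTW F := fun _ hy => hy.1

theorem genCyl_union : genCyl F w (F' ∪ G') = genCyl F w F' ∩ genCyl F w G' := by
  ext y
  exact ⟨fun ⟨hy, hyw, hyF⟩ => ⟨⟨hy, hyw, fun a ha => hyF a (.inl ha)⟩,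
      ⟨hy, hyw, fun a ha => hyF a (.inr ha)⟩⟩,
    fun ⟨⟨hy, hyw, hyF⟩, ⟨_, _, hyG⟩⟩ => ⟨hy, hyw, fun a ha => ha.elim (hyF a) (hyG a)⟩⟩

theorem eq_ofWord_of_mem_genCyl_of_le {n : ℕ} (hy : y ∈ genCyl F w F') (hn : y n = none)
    (hle : n ≤ w.length) : y = ofWord w :=
  HasPrefix.eq_ofWord hy.1 hy.2.1 (le_antisymm hle (HasPrefix.length_le hy.2.1 hn) ▸ hn)

theorem mem_genCyl_of_eqOn (hz : z ∈ OTW F) (hy : y ∈ genCyl F w F')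
    (h : ∀ j ≤ w.length, z j = y j) : z ∈ genCyl F w F' :=
  ⟨hz, fun j hj => (h j hj.le).trans (hy.2.1 j hj), fun a ha => h _ le_rfl ▸ hy.2.2 a ha⟩

theorem genCyl_subset_of_mem_inter (hy : y ∈ genCyl F w F' ∩ genCyl F v G')
    (hlt : w.length < v.length) : genCyl F v G' ⊆ genCyl F w F' := fun _ hz =>
  mem_genCyl_of_eqOn hz.1 hy.1 fun j hj =>
    (hz.2.1 j (hj.trans_lt hlt)).trans (hy.2.2.1 j (hj.trans_lt hlt)).symm

theorem exists_genCyl_eq_inter (hy : y ∈ genCyl F w F' ∩ genCyl F v G') :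
    ∃ u ∈ ({w, v} : Set (List A)), ∃ H ⊆ F' ∪ G',
      genCyl F w F' ∩ genCyl F v G' = genCyl F u H := by
  rcases lt_trichotomy w.length v.length with hlt | heq | hgt
  · exact ⟨v, .inr rfl, G', subset_union_right,
      inter_eq_right.2 (genCyl_subset_of_mem_inter hy hlt)⟩
  · obtain rfl := HasPrefix.eq_of_length_eq hy.1.2.1 hy.2.2.1 heq
    exact ⟨w, .inl rfl, F' ∪ G', subset_rfl, genCyl_union.symm⟩
  · exact ⟨w, .inl rfl, F', subset_union_left,
      inter_eq_left.2 (genCyl_subset_of_mem_inter ⟨hy.2, hy.1⟩ hgt)⟩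

end Cylinders

section Topology

variable {A : Type*} {F : Set (List A)} {w : List A} {F' : Set A}

theorem isTopologicalBasis_genCyl :
    IsTopologicalBasis {V : Set (OTW F) | ∃ w ∈ Lang F, ∃ F' : Set A, F'.Finite ∧
      V = Subtype.val ⁻¹' genCyl F w F'} := by
  refine .mk ?_ ?_ rfl
  · rintro _ ⟨w, hw, F', hF', rfl⟩ _ ⟨v, hv, G', hG', rfl⟩ y hy
    obtain ⟨u, hu, H, hH, heq⟩ := exists_genCyl_eq_inter hy
    refine ⟨Subtype.val ⁻¹' genCyl F u H,
      ⟨u, hu.elim (· ▸ hw) (· ▸ hv), H, (hF'.union hG').subset hH, rfl⟩, ?_, ?_⟩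
    · rw [mem_preimage, ← heq]
      exact hy
    · rw [← preimage_inter, heq]
  · exact sUnion_eq_univ_iff.2 fun y => ⟨_, ⟨[], mem_Lang_of_hasPrefix y.2 (hasPrefix_nil _), ∅,
      finite_empty, rfl⟩, y.2, hasPrefix_nil _, fun _ h => h.elim⟩

theorem isOpen_preimage_genCyl (w : List A) (hF' : F'.Finite) :
    IsOpen (Subtype.val ⁻¹' genCyl F w F' : Set (OTW F)) := by
  by_cases hw : w ∈ Lang F
  · exact isTopologicalBasis_genCyl.isOpen ⟨w, hw, F', hF', rfl⟩
  · convert isOpen_empty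
    exact eq_empty_of_forall_notMem fun y hy => hw (mem_Lang_of_hasPrefix y.2 hy.2.1)

theorem isClosed_preimage_genCyl (w : List A) (F' : Set A) :
    IsClosed (Subtype.val ⁻¹' genCyl F w F' : Set (OTW F)) := by
  refine isOpen_compl_iff.1 (isOpen_iff_forall_mem_open.2 fun y hy => ?_)
  by_cases hw : HasPrefix y.1 w
  · obtain ⟨a, ha, hya⟩ : ∃ a ∈ F', y.1 w.length = some a := by
      by_contra! h
      exact hy ⟨y.2, hw, h⟩
    exact ⟨Subtype.val ⁻¹' genCyl F (w ++ [a]) ∅,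
      fun _ hz hzK => hzK.2.2 a ha (hasPrefix_append_singleton.1 hz.2.1).2,
      isOpen_preimage_genCyl _ finite_empty, y.2, hasPrefix_append_singleton.2 ⟨hw, hya⟩,
      fun _ h => h.elim⟩
  · obtain ⟨v, a, hva, hv, hya⟩ := exists_mismatch_of_not_hasPrefix hw
    exact ⟨Subtype.val ⁻¹' genCyl F v {a},
      fun _ hz hzK =>
        hz.2.2 a rfl (hasPrefix_append_singleton.1 (HasPrefix.of_isPrefix hzK.2.1 hva)).2,
      isOpen_preimage_genCyl _ (finite_singleton a), y.2, hv, fun b (hb : b = a) => hb ▸ hya⟩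

theorem le_nhds_of_forall_genCyl {f : Filter (OTW F)} {p : OTW F}
    (h : ∀ w ∈ Lang F, ∀ F' : Set A, F'.Finite → p.1 ∈ genCyl F w F' →
      Subtype.val ⁻¹' genCyl F w F' ∈ f) : f ≤ 𝓝 p := fun t ht => by
  obtain ⟨_, ⟨w, hw, F', hF', rfl⟩, hp, hsub⟩ := isTopologicalBasis_genCyl.mem_nhds_iff.1 ht
  exact mem_of_superset (h w hw F' hF' hp) hsub

end Topology

section Compactness

variable {A : Type*} {F : Set (List A)} {𝒰 : Ultrafilter (OTW F)}

theorem setOf_hasPrefix_mem {w : List A}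
    (hw : ∀ j (hj : j < w.length), {y : OTW F | y.1 j = some w[j]} ∈ 𝒰) :
    {y : OTW F | HasPrefix y.1 w} ∈ 𝒰 := by
  have : {y : OTW F | HasPrefix y.1 w} = ⋂ j : Fin w.length, {y : OTW F | y.1 j = some w[j]} := by
    ext y
    simp [HasPrefix, Fin.forall_iff]
  rw [this]
  exact iInter_mem.2 fun j => hw j j.2

theorem mem_subshift_of_letter_mem {z : ℕ → A}
    (hz : ∀ n, {y : OTW F | y.1 n = some (z n)} ∈ 𝒰) : z ∈ SubshiftOf F := by
  intro u hu i hblock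
  set w := List.ofFn fun j : Fin (i + u.length) => z j
  obtain ⟨y, hy⟩ := 𝒰.nonempty_of_mem (setOf_hasPrefix_mem (w := w) fun j hj => by
    simpa [w] using hz j)
  obtain ⟨x, hx, hxy⟩ := exists_mem_subshift_extending y.2
  refine hx u hu i fun j hj => ?_
  rw [← hblock j hj]
  have hyz := hy (i + j) (by simp [w, hj])
  rw [List.getElem_ofFn] at hyz
  exact hxy _ _ hyz

theorem le_nhds_ofSeq {z : ℕ → A} (hz : ∀ n, {y : OTW F | y.1 n = some (z n)} ∈ 𝒰)
    (hzX : z ∈ SubshiftOf F) : ↑𝒰 ≤ 𝓝 (⟨ofSeq z, ofSeq_mem_OTW hzX⟩ : OTW F) := by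
  refine le_nhds_of_forall_genCyl fun u _ F' _ hu => ?_
  have hpre : {y : OTW F | HasPrefix y.1 u} ∈ 𝒰 := setOf_hasPrefix_mem fun j hj => by
    rw [← Option.some_inj.1 (hu.2.1 j hj)]
    exact hz j
  filter_upwards [hpre, hz u.length] with y hyu hyn
  exact ⟨y.2, hyu, fun a ha h => hu.2.2 a ha (hyn.symm.trans h)⟩

theorem mem_XFin_of_letter_mem {w : List A}
    (hw : ∀ j (hj : j < w.length), {y : OTW F | y.1 j = some w[j]} ∈ 𝒰)
    (hnext : ∀ a, {y : OTW F | y.1 w.length = some a} ∉ 𝒰) : w ∈ XFin F := by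
  have hpre := setOf_hasPrefix_mem hw
  by_cases hnone : {y : OTW F | y.1 w.length = none} ∈ 𝒰
  · obtain ⟨y, hyw, hyn⟩ := 𝒰.nonempty_of_mem (inter_mem hpre hnone)
    exact ofWord_mem_OTW_iff.1 (HasPrefix.eq_ofWord y.2 hyw hyn ▸ y.2)
  · -- `𝒰` lives on points with a letter at `|w|`, all of them extension letters of `w`, but on no
    -- set fixing one letter: so there are infinitely many extension letters.
    intro hfin
    have hcover : {y : OTW F | HasPrefix y.1 w} ∩ {y | y.1 w.length = none}ᶜ ⊆
        ⋃ a ∈ {a | ∃ x, wcat (w ++ [a]) x ∈ SubshiftOf F}, {y : OTW F | y.1 w.length = some a} := by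
      rintro y ⟨hyw, hyn⟩
      obtain ⟨a, ha⟩ := Option.ne_none_iff_exists'.1 hyn
      exact mem_biUnion
        (exists_wcat_mem_of_hasPrefix y.2 (hasPrefix_append_singleton.2 ⟨hyw, ha⟩)) ha
    obtain ⟨a, -, ha⟩ := (Ultrafilter.finite_biUnion_mem_iff hfin).1
      (mem_of_superset (inter_mem hpre (𝒰.compl_mem_iff_notMem.2 hnone)) hcover)
    exact hnext a ha

theorem le_nhds_ofWord {w : List A}
    (hw : ∀ j (hj : j < w.length), {y : OTW F | y.1 j = some w[j]} ∈ 𝒰)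
    (hnext : ∀ a, {y : OTW F | y.1 w.length = some a} ∉ 𝒰) (hwX : w ∈ XFin F) :
    ↑𝒰 ≤ 𝓝 (⟨ofWord w, ofWord_mem_OTW hwX⟩ : OTW F) := by
  refine le_nhds_of_forall_genCyl fun u _ F' hF' hu => ?_
  have hlen : u.length ≤ w.length := HasPrefix.length_le hu.2.1 (ofWord_eq_none_iff.2 le_rfl)
  have hpre : {y : OTW F | HasPrefix y.1 u} ∈ 𝒰 := setOf_hasPrefix_mem fun j hj => by
    have hj' := hj.trans_le hlen
    rw [← Option.some_inj.1 ((ofWord_of_lt hj').symm.trans (hu.2.1 j hj))]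
    exact hw j hj'
  have hnext' : {y : OTW F | ∀ a ∈ F', y.1 u.length ≠ some a} ∈ 𝒰 := by
    rcases hlen.lt_or_eq with hlt | heq
    · filter_upwards [hw _ hlt] with y hy a ha h
      exact hu.2.2 a ha ((ofWord_of_lt hlt).trans (hy.symm.trans h))
    · have : {y : OTW F | ∀ a ∈ F', y.1 u.length ≠ some a} =
          (⋃ a ∈ F', {y : OTW F | y.1 u.length = some a})ᶜ := by
        ext
        simp
      rw [this, Ultrafilter.compl_mem_iff_notMem, Ultrafilter.finite_biUnion_mem_iff hF']
      exact fun ⟨a, _, ha⟩ => hnext a (heq ▸ ha)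
  filter_upwards [hpre, hnext'] with y hyu hyn using ⟨y.2, hyu, hyn⟩

instance OTW.compactSpace (F : Set (List A)) : CompactSpace (OTW F) := by
  refine ⟨isCompact_iff_ultrafilter_le_nhds.2 fun 𝒰 _ => ?_⟩
  by_cases hall : ∀ n, ∃ a : A, {y : OTW F | y.1 n = some a} ∈ 𝒰
  · choose z hz using hall
    exact ⟨_, trivial, le_nhds_ofSeq hz (mem_subshift_of_letter_mem hz)⟩
  · -- the limit is the word of letters fixed by `𝒰` before the first position fixing none
    classical
    have hex : ∃ k, ∀ a : A, {y : OTW F | y.1 k = some a} ∉ 𝒰 := by simpa using hall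
    have hbefore (j : ℕ) (hj : j < Nat.find hex) : ∃ a : A, {y : OTW F | y.1 j = some a} ∈ 𝒰 := by
      simpa using Nat.find_min hex hj
    choose g hg using hbefore
    set w := List.ofFn fun j : Fin (Nat.find hex) => g j j.2
    have hw (j : ℕ) (hj : j < w.length) : {y : OTW F | y.1 j = some w[j]} ∈ 𝒰 := by
      simpa [w] using hg j (by simpa [w] using hj)
    have hnext (a : A) : {y : OTW F | y.1 w.length = some a} ∉ 𝒰 := by
      simpa [w] using Nat.find_spec hex a
    exact ⟨_, trivial, le_nhds_ofWord hw hnext (mem_XFin_of_letter_mem hw hnext)⟩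

end Compactness

section Refinement

variable {A : Type*} {F : Set (List A)} {n : ℕ}

def IsFinGenCylUnion (F : Set (List A)) (n : ℕ) (S : Set (ℕ → Option A)) : Prop :=
  ∃ s : Set (List A × Set A), s.Finite ∧
    (∀ p ∈ s, p.1 ∈ Lang F ∧ n ≤ p.1.length ∧ p.2.Finite) ∧ S = ⋃ p ∈ s, genCyl F p.1 p.2

theorem IsFinGenCylUnion.genCyl {w : List A} {F' : Set A} (hw : w ∈ Lang F) (hn : n ≤ w.length)
    (hF' : F'.Finite) : IsFinGenCylUnion F n (genCyl F w F') :=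
  ⟨{(w, F')}, finite_singleton _, by simpa using ⟨hw, hn, hF'⟩, by simp⟩

theorem IsFinGenCylUnion.biUnion {ι : Type*} {s : Set ι} {S : ι → Set (ℕ → Option A)}
    (hs : s.Finite) (h : ∀ i ∈ s, IsFinGenCylUnion F n (S i)) :
    IsFinGenCylUnion F n (⋃ i ∈ s, S i) := by
  choose t ht hprop heq using h
  refine ⟨⋃ i, ⋃ hi : i ∈ s, t i hi, hs.biUnion' ht, ?_, ?_⟩
  · simp only [mem_iUnion]
    exact fun p ⟨i, hi, hp⟩ => hprop i hi p hp
  · rw [iUnion₂_congr heq]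
    ext y
    simp only [mem_iUnion, exists_prop]
    grind

theorem genCyl_eq_biUnion_of_notMem_XFin {μ : List A} {M : Set A} (hμ : μ ∉ XFin F) :
    genCyl F μ M = ⋃ a ∈ {a | a ∉ M ∧ ∃ x, wcat (μ ++ [a]) x ∈ SubshiftOf F},
      genCyl F (μ ++ [a]) ∅ := by
  ext y
  simp only [mem_iUnion, exists_prop]
  constructor
  · rintro ⟨hy, hyμ, hyM⟩
    obtain ⟨a, ha⟩ := Option.ne_none_iff_exists'.1 fun hn =>
      hμ (ofWord_mem_OTW_iff.1 (HasPrefix.eq_ofWord hy hyμ hn ▸ hy))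
    have hya : HasPrefix y (μ ++ [a]) := hasPrefix_append_singleton.2 ⟨hyμ, ha⟩
    exact ⟨a, ⟨fun haM => hyM a haM ha, exists_wcat_mem_of_hasPrefix hy hya⟩, hy, hya,
      fun _ h => h.elim⟩
  · rintro ⟨a, ⟨haM, -⟩, hy, hya, -⟩
    obtain ⟨hyμ, ha⟩ := hasPrefix_append_singleton.1 hya
    exact ⟨hy, hyμ, fun b hb hyb => haM (Option.some_injective _ (ha.symm.trans hyb) ▸ hb)⟩

theorem isFinGenCylUnion_genCyl {μ : List A} {M : Set A} (hμ : μ ∈ Lang F) (hM : M.Finite)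
    (hlong : ∀ y ∈ genCyl F μ M, ∀ j < n, y j ≠ none) : IsFinGenCylUnion F n (genCyl F μ M) := by
  induction hd : n - μ.length generalizing μ M with
  | zero => exact .genCyl hμ (by omega) hM
  | succ d ih =>
    have hμX : μ ∉ XFin F := fun h =>
      hlong _ (ofWord_mem_genCyl h M) μ.length (by omega) (ofWord_eq_none_iff.2 le_rfl)
    rw [genCyl_eq_biUnion_of_notMem_XFin hμX]
    refine .biUnion ((not_infinite.1 hμX).subset fun a ha => ha.2) fun a ha => ?_
    refine ih (mem_Lang_of_wcat_mem ha.2.choose_spec) finite_empty (fun y hy => hlong y ?_)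
      (by simp; omega)
    rw [genCyl_eq_biUnion_of_notMem_XFin hμX]
    exact mem_biUnion ha hy

theorem isFinGenCylUnion_image_of_isCompact_isOpen {U : Set (OTW F)} (hc : IsCompact U)
    (ho : IsOpen U) (hlong : ∀ y ∈ U, ∀ j < n, (y : ℕ → Option A) j ≠ none) :
    IsFinGenCylUnion F n (Subtype.val '' U) := by
  obtain ⟨s, hs, hU⟩ := eq_finite_iUnion_of_isTopologicalBasis_of_isCompact_open _
    (by rw [Subtype.range_coe]; exact isTopologicalBasis_genCyl) U hc ho
  rw [hU, image_iUnion₂]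
  refine .biUnion hs fun ⟨_, w, hw, F', hF', rfl⟩ hi => ?_
  rw [Subtype.image_preimage_coe, inter_eq_right.2 genCyl_subset_OTW]
  refine isFinGenCylUnion_genCyl hw hF' fun y hy => hlong ⟨y, hy.1⟩ ?_
  rw [hU]
  exact mem_biUnion hi hy

end Refinement

theorem conjugacy_image_genCyl_general {A₁ A₂ : Type*} (F₁ : Set (List A₁)) (F₂ : Set (List A₂))
    (h : ↥(OTW F₁) ≃ₜ ↥(OTW F₂)) (hconj : IsConjugacy F₁ F₂ h)
    (α : List A₁) (Fs : Set A₁) (hFs : Fs.Finite) :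
    ∃ (m : ℕ) (μ : Fin m → List A₂) (M : Fin m → Set A₂),
      (∀ i, μ i ∈ Lang F₂ ∧ α.length ≤ (μ i).length ∧ (M i).Finite) ∧
      (Subtype.val '' (⇑h '' {y : ↥(OTW F₁) | (y : ℕ → Option A₁) ∈ genCyl F₁ α Fs})
        = ⋃ i, genCyl F₂ (μ i) (M i)) ∧
      ∀ hfin : α ∈ XFin F₁,
        (∃ j, ofWord (μ j) = (h ⟨ofWord α, ofWord_mem_OTW hfin⟩ : ℕ → Option A₂)) ∧
        ∀ i, (μ i).length = α.length → μ i ∈ XFin F₂ →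
          ofWord (μ i) = (h ⟨ofWord α, ofWord_mem_OTW hfin⟩ : ℕ → Option A₂) := by
  obtain ⟨-, hlen⟩ := hconj
  set K : Set (OTW F₁) := {y | (y : ℕ → Option A₁) ∈ genCyl F₁ α Fs}
  obtain ⟨s, hs, hprop, himage⟩ := isFinGenCylUnion_image_of_isCompact_isOpen (n := α.length)
    ((isClosed_preimage_genCyl α Fs).isCompact.image h.continuous)
    (h.isOpenMap _ (isOpen_preimage_genCyl α hFs)) <| by
      rintro _ ⟨y, hy, rfl⟩ j hj
      exact (hlen y j).not.2 (by simp [hy.2.1 j hj])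
  obtain ⟨m, f, rfl⟩ := hs.fin_embedding
  rw [biUnion_range] at himage
  refine ⟨m, fun i => (f i).1, fun i => (f i).2, fun i => hprop _ ⟨i, rfl⟩, himage, fun hαX => ?_⟩
  set y₀ : OTW F₁ := ⟨ofWord α, ofWord_mem_OTW hαX⟩
  have hy₀K : y₀ ∈ K := ofWord_mem_genCyl hαX Fs
  refine ⟨?_, fun i hi hiX => ?_⟩
  · obtain ⟨j, hj⟩ := mem_iUnion.1 (himage ▸ mem_image_of_mem _
      (mem_image_of_mem h hy₀K))
    exact ⟨j, (eq_ofWord_of_mem_genCyl_of_le hj ((hlen y₀ _).2 (ofWord_eq_none_iff.2 le_rfl))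
      (hprop _ ⟨j, rfl⟩).2.1).symm⟩
  · obtain ⟨_, ⟨y, hy, rfl⟩, hyμ⟩ : ofWord (f i).1 ∈ Subtype.val '' (h '' K) :=
      himage ▸ mem_iUnion.2 ⟨i, ofWord_mem_genCyl hiX _⟩
    have hy₀ : y = y₀ := Subtype.ext <| eq_ofWord_of_mem_genCyl_of_le hy
      ((hlen y _).1 (by rw [hyμ, ofWord_eq_none_iff, hi])) le_rfl
    rw [← hyμ, hy₀]

theorem conjugacy_image_genCyl {A₁ A₂ : Type*} (F₁ : Set (List A₁)) (F₂ : Set (List A₂))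
    (h : ↥(OTW F₁) ≃ₜ ↥(OTW F₂)) (hconj : IsConjugacy F₁ F₂ h)
    (α : List A₁) (hα : α ∈ Lang F₁) (Fs : Set A₁) (hFs : Fs.Finite) :
    ∃ (m : ℕ) (μ : Fin m → List A₂) (M : Fin m → Set A₂),
      (∀ i, μ i ∈ Lang F₂ ∧ α.length ≤ (μ i).length ∧ (M i).Finite) ∧
      (Subtype.val '' (⇑h '' {y : ↥(OTW F₁) | (y : ℕ → Option A₁) ∈ genCyl F₁ α Fs})
        = ⋃ i, genCyl F₂ (μ i) (M i)) ∧
      ∀ hfin : α ∈ XFin F₁,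
        (∃ j, ofWord (μ j) = (h ⟨ofWord α, ofWord_mem_OTW hfin⟩ : ℕ → Option A₂)) ∧
        ∀ i, (μ i).length = α.length → μ i ∈ XFin F₂ →
          ofWord (μ i) = (h ⟨ofWord α, ofWord_mem_OTW hfin⟩ : ℕ → Option A₂) :=
  conjugacy_image_genCyl_general F₁ F₂ h hconj α Fs hFs
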